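/- Let 1 ≤ p < ∞ and consider the rooted ray tree: I = ℕ with parent map P(i+1) = some i and P(0) = none, so that M_n(i) = {i+n} for all n, i. Let ρ = (ρ_i)_{i∈ℕ} be a weight and define ρ̃ : [0,∞) → ℝ by ρ̃(u) := ρ_{⌊u⌋}(u − ⌊u⌋). Then the map Φ defined by Φ(f)(u) := f_{⌊u⌋}(u − ⌊u⌋) is a surjective linear isometry from L^p_ρ(L(G)) onto the weighted space L^p([0,∞), ρ̃(u)du), and Φ intertwines the tree translation with the classical left translation on the half-line: for every f ∈ L^p_ρ(L(G)) and every t ≥ 0, Φ(T_t f)(u) = Φ(f)(u + t) for almost every u ≥ 0. -/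

import Mathlib

/-!
`[0, ∞)` is the disjoint union of the cells `[i, i + 1)`, each a translate of `[0, 1)`, and
`Φ` places `f_i` on the `i`-th cell. Hence integrals of nonnegative functions, null sets and
measurability on `[0, ∞)` split into the same data on the cells, which makes `Φ` an isometry
with inverse `g ↦ (s ↦ g (s + i))_i`. Since `ρ > 0` a.e., `ρ̃ du` and `du` have the same null
sets on `[0, ∞)`, so every `g` in the weighted `L^p` is measurable enough to be pulled back.
The intertwining is the floor identity `⌊u + t⌋ = ⌊u⌋ + ⌊(u - ⌊u⌋) + t⌋` for `u, t ≥ 0`.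
-/

open MeasureTheory ENNReal

noncomputable section

/-- `nfl t s = ⌊s + t⌋ ∈ ℕ`. -/
def nfl (t s : ℝ) : ℕ := ⌊s + t⌋₊

/-- The left translation on the rooted ray tree (`I = ℕ`, parent map `P (i+1) = some i`,
`P 0 = none`, so `M_n(i) = {i + n}`): `(T_t f)_i(s) = f_{i+n(t,s)}(t + s - n(t,s))`. -/
def TleftRay (f : ℕ → ℝ → ℝ) (t : ℝ) (i : ℕ) (s : ℝ) : ℝ :=
  f (i + nfl t s) (t + s - (nfl t s : ℝ))

/-- The `p`-th power of the norm of a family `f` in `L^p_ρ(L(G))`: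
`‖f‖_{p,ρ}^p = ∑_{i ∈ ℕ} ∫_0^1 |f_i(s)|^p ρ_i(s) ds`, with values in `[0,∞]`. -/
def pnorm (ρ : ℕ → ℝ → ℝ) (p : ℝ) (f : ℕ → ℝ → ℝ) : ℝ≥0∞ :=
  ∑' i, ∫⁻ s in Set.Icc (0 : ℝ) 1, ENNReal.ofReal (|f i s| ^ p * ρ i s)

/-- Membership in `L^p_ρ(L(G))`. -/
def memLprho (ρ : ℕ → ℝ → ℝ) (p : ℝ) (f : ℕ → ℝ → ℝ) : Prop :=
  (∀ i, AEMeasurable (f i) (volume.restrict (Set.Icc (0 : ℝ) 1))) ∧ pnorm ρ p f < ⊤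

/-- The identification `Φ(f)(u) = f_{⌊u⌋}(u - ⌊u⌋)` of families on the ray tree with
functions on `[0,∞)`. -/
def Phi (f : ℕ → ℝ → ℝ) (u : ℝ) : ℝ := f ⌊u⌋₊ (u - (⌊u⌋₊ : ℝ))

/-- The glued weight `ρ̃(u) = ρ_{⌊u⌋}(u - ⌊u⌋)` on `[0,∞)`. -/
def rhoTilde (ρ : ℕ → ℝ → ℝ) (u : ℝ) : ℝ := ρ ⌊u⌋₊ (u - (⌊u⌋₊ : ℝ))

/-- The weighted measure `ρ̃(u) du` on `[0,∞)`. -/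
def rayMeasure (ρ : ℕ → ℝ → ℝ) : Measure ℝ :=
  (volume.restrict (Set.Ici (0 : ℝ))).withDensity fun u => ENNReal.ofReal (rhoTilde ρ u)


open Set

/-- `Phi f` and `rhoTilde ρ` are `glue f` and `glue ρ` by definition. -/
def glue {α : Type*} (F : ℕ → ℝ → α) (u : ℝ) : α := F ⌊u⌋₊ (u - ⌊u⌋₊)

theorem glue_shift {α : Type*} (g : ℝ → α) : glue (fun i s => g (s + i)) = g :=
  funext fun u => congrArg g (sub_add_cancel u _)

theorem glue_add_natCast {α : Type*} (F : ℕ → ℝ → α) {s : ℝ} (hs : s ∈ Ico (0 : ℝ) 1)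
    (i : ℕ) : glue F (s + i) = F i s := by
  rw [glue, Nat.floor_add_natCast hs.1, Nat.floor_eq_zero.2 hs.2, zero_add,
    add_sub_cancel_right]

theorem Ici_zero_eq_iUnion_Ico_natCast : Ici (0 : ℝ) = ⋃ i : ℕ, Ico (i : ℝ) (i + 1) := by
  ext u
  simp only [mem_Ici, mem_iUnion, mem_Ico]
  exact ⟨fun hu => ⟨⌊u⌋₊, Nat.floor_le hu, Nat.lt_floor_add_one u⟩,
    fun ⟨i, hi, _⟩ => (Nat.cast_nonneg i).trans hi⟩

theorem pairwise_disjoint_Ico_natCast :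
    Pairwise (Function.onFun Disjoint fun i : ℕ => Ico (i : ℝ) (i + 1)) := fun i j hij => by
  simpa using pairwise_disjoint_Ico_intCast ℝ (Nat.cast_injective.ne hij)

theorem map_add_natCast_restrict_Ico (i : ℕ) :
    (volume.restrict (Ico (0 : ℝ) 1)).map (· + (i : ℝ)) =
      volume.restrict (Ico (i : ℝ) (i + 1)) := by
  have h := (measurableEmbedding_addRight (i : ℝ)).restrict_map volume (Ico (i : ℝ) (i + 1))
  rwa [map_add_right_eq_self, preimage_add_const_Ico, sub_self, add_sub_cancel_left,
    eq_comm] at h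

theorem lintegral_glue (G : ℕ → ℝ → ℝ≥0∞) :
    ∫⁻ u in Ici 0, glue G u = ∑' i, ∫⁻ s in Icc 0 1, G i s := by
  rw [Ici_zero_eq_iUnion_Ico_natCast,
    lintegral_iUnion (fun _ => measurableSet_Ico) pairwise_disjoint_Ico_natCast,
    ← Measure.restrict_congr_set Ico_ae_eq_Icc]
  refine tsum_congr fun i => ?_
  rw [← map_add_natCast_restrict_Ico, (measurableEmbedding_addRight _).lintegral_map]
  exact setLIntegral_congr_fun measurableSet_Ico fun s hs => glue_add_natCast G hs i

theorem ae_glue {Q : ℕ → ℝ → Prop} (h : ∀ i, ∀ᵐ s ∂volume.restrict (Icc (0 : ℝ) 1), Q i s) :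
    ∀ᵐ u ∂volume.restrict (Ici 0), glue Q u := by
  rw [Ici_zero_eq_iUnion_Ico_natCast, ae_restrict_iUnion_iff]
  intro i
  rw [← map_add_natCast_restrict_Ico, (measurableEmbedding_addRight _).ae_map_iff]
  rw [← Measure.restrict_congr_set Ico_ae_eq_Icc] at h
  filter_upwards [h i, ae_restrict_mem measurableSet_Ico] with s hQ hs
  rwa [glue_add_natCast Q hs]

theorem aemeasurable_glue_iff {β : Type*} [MeasurableSpace β] {F : ℕ → ℝ → β} :
    AEMeasurable (glue F) (volume.restrict (Ici 0)) ↔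
      ∀ i, AEMeasurable (F i) (volume.restrict (Icc 0 1)) := by
  rw [Ici_zero_eq_iUnion_Ico_natCast, aemeasurable_iUnion_iff,
    ← Measure.restrict_congr_set Ico_ae_eq_Icc]
  refine forall_congr' fun i => ?_
  rw [← map_add_natCast_restrict_Ico, (measurableEmbedding_addRight _).aemeasurable_map_iff]
  refine aemeasurable_congr ?_
  filter_upwards [ae_restrict_mem measurableSet_Ico] with s hs
  exact glue_add_natCast F hs i

theorem eLpNorm_ofReal_lt_top_iff {X : Type*} [MeasurableSpace X] {μ : Measure X} {g : X → ℝ}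
    {p : ℝ} (hp : 0 < p) :
    eLpNorm g (ENNReal.ofReal p) μ < ⊤ ↔ ∫⁻ x, ENNReal.ofReal (|g x| ^ p) ∂μ < ⊤ := by
  rw [eLpNorm_lt_top_iff_lintegral_rpow_enorm_lt_top (by simpa using hp) ofReal_ne_top,
    toReal_ofReal hp.le]
  simp_rw [Real.enorm_eq_ofReal_abs, ofReal_rpow_of_nonneg (abs_nonneg _) hp.le]

section RayMeasure

variable {ρ : ℕ → ℝ → ℝ} {p : ℝ}

theorem lintegral_rayMeasure_glue (hρ : AEMeasurable (rhoTilde ρ) (volume.restrict (Ici 0)))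
    (G : ℕ → ℝ → ℝ≥0∞) :
    ∫⁻ u, glue G u ∂rayMeasure ρ = ∑' i, ∫⁻ s in Icc 0 1, ENNReal.ofReal (ρ i s) * G i s := by
  rw [rayMeasure, lintegral_withDensity_eq_lintegral_mul_non_measurable₀ _ hρ.ennreal_ofReal
    (ae_of_all _ fun _ => ofReal_lt_top)]
  exact lintegral_glue fun i s => ENNReal.ofReal (ρ i s) * G i s

theorem lintegral_abs_rpow_Phi (hρ : AEMeasurable (rhoTilde ρ) (volume.restrict (Ici 0)))
    (f : ℕ → ℝ → ℝ) :
    ∫⁻ u, ENNReal.ofReal (|Phi f u| ^ p) ∂rayMeasure ρ = pnorm ρ p f :=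
  (lintegral_rayMeasure_glue hρ fun i s => ENNReal.ofReal (|f i s| ^ p)).trans <|
    tsum_congr fun i => lintegral_congr fun s => by
      rw [ENNReal.ofReal_mul (by positivity), mul_comm]

theorem memLp_Phi (hp : 0 < p) (hρ : AEMeasurable (rhoTilde ρ) (volume.restrict (Ici 0)))
    {f : ℕ → ℝ → ℝ} (hf : memLprho ρ p f) : MemLp (Phi f) (ENNReal.ofReal p) (rayMeasure ρ) :=
  ⟨((aemeasurable_glue_iff.2 hf.1).mono_ac
      (withDensity_absolutelyContinuous _ _)).aestronglyMeasurable,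
    (eLpNorm_ofReal_lt_top_iff hp).2 ((lintegral_abs_rpow_Phi hρ f).trans_lt hf.2)⟩

theorem restrict_Ici_absolutelyContinuous_rayMeasure
    (hρ : AEMeasurable (rhoTilde ρ) (volume.restrict (Ici 0)))
    (hpos : ∀ i, ∀ᵐ s ∂volume.restrict (Icc (0 : ℝ) 1), 0 < ρ i s) :
    volume.restrict (Ici 0) ≪ rayMeasure ρ :=
  withDensity_absolutelyContinuous' hρ.ennreal_ofReal <| by
    filter_upwards [ae_glue hpos] with u hu using (ofReal_pos.2 hu).ne'

theorem memLprho_shift (hp : 0 < p) (hρ : AEMeasurable (rhoTilde ρ) (volume.restrict (Ici 0)))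
    (hpos : ∀ i, ∀ᵐ s ∂volume.restrict (Icc (0 : ℝ) 1), 0 < ρ i s) {g : ℝ → ℝ}
    (hg : MemLp g (ENNReal.ofReal p) (rayMeasure ρ)) : memLprho ρ p fun i s => g (s + i) := by
  have hPhi : Phi (fun i s => g (s + i)) = g := glue_shift g
  refine ⟨aemeasurable_glue_iff.1 ?_, ?_⟩
  · rw [glue_shift]
    exact hg.1.aemeasurable.mono_ac (restrict_Ici_absolutelyContinuous_rayMeasure hρ hpos)
  · rw [← lintegral_abs_rpow_Phi hρ, hPhi]
    exact (eLpNorm_ofReal_lt_top_iff hp).1 hg.2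

end RayMeasure

theorem Phi_TleftRay (f : ℕ → ℝ → ℝ) {t u : ℝ} (ht : 0 ≤ t) (hu : 0 ≤ u) :
    Phi (TleftRay f t) u = Phi f (u + t) := by
  set n := ⌊u⌋₊
  set s := u - n
  have hs : 0 ≤ s := sub_nonneg.2 (Nat.floor_le hu)
  have hfloor : ⌊u + t⌋₊ = n + nfl t s := by
    rw [nfl, show u + t = s + t + n by ring, Nat.floor_add_natCast (by positivity), add_comm]
  simp only [Phi, TleftRay, hfloor]
  congr 1
  push_cast
  ring

/-- **Remark 1.6 (rooted ray)**.  Let `1 ≤ p < ∞` and consider the rooted ray tree `I = ℕ`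
with `M_n(i) = {i+n}`.  Let `ρ = (ρ_i)_{i ∈ ℕ}` be a weight and `ρ̃(u) = ρ_{⌊u⌋}(u - ⌊u⌋)`.
Then `Φ(f)(u) = f_{⌊u⌋}(u - ⌊u⌋)` is a surjective linear isometry from `L^p_ρ(L(G))` onto
`L^p([0,∞), ρ̃(u)du)`, and `Φ` intertwines the tree translation with the classical left
translation on the half-line: `Φ(T_t f)(u) = Φ(f)(u + t)` for a.e. `u ≥ 0`. -/
theorem ray_tree_isometry_halfline (p : ℝ) (hp : 1 ≤ p) (ρ : ℕ → ℝ → ℝ)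
    (hint : ∀ i, IntegrableOn (ρ i) (Set.Icc (0 : ℝ) 1))
    (hpos : ∀ i, ∀ᵐ s ∂(volume.restrict (Set.Icc (0 : ℝ) 1)), 0 < ρ i s) :
    (∀ (f g : ℕ → ℝ → ℝ) (a b : ℝ),
      Phi (fun i s => a * f i s + b * g i s) = fun u => a * Phi f u + b * Phi g u) ∧
    (∀ f, memLprho ρ p f →
      MemLp (Phi f) (ENNReal.ofReal p) (rayMeasure ρ) ∧
      ∫⁻ u, ENNReal.ofReal (|Phi f u| ^ p) ∂(rayMeasure ρ) = pnorm ρ p f) ∧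
    (∀ g : ℝ → ℝ, MemLp g (ENNReal.ofReal p) (rayMeasure ρ) →
      ∃ f, memLprho ρ p f ∧ Phi f =ᵐ[rayMeasure ρ] g) ∧
    (∀ f, memLprho ρ p f → ∀ t ≥ (0 : ℝ),
      ∀ᵐ u ∂(volume.restrict (Set.Ici (0 : ℝ))), Phi (TleftRay f t) u = Phi f (u + t)) := by
  have hp0 : 0 < p := zero_lt_one.trans_le hp
  have hρ : AEMeasurable (rhoTilde ρ) (volume.restrict (Ici 0)) :=
    aemeasurable_glue_iff.2 fun i => (hint i).aemeasurable
  refine ⟨fun f g a b => rfl,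
    fun f hf => ⟨memLp_Phi hp0 hρ hf, lintegral_abs_rpow_Phi hρ f⟩,
    fun g hg => ⟨_, memLprho_shift hp0 hρ hpos hg, .of_eq (glue_shift g)⟩,
    fun f _ t ht => ?_⟩
  filter_upwards [ae_restrict_mem measurableSet_Ici] with u hu using Phi_TleftRay f ht hu

end
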